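/- arXiv:2312.12950 — 3 statements merged into one kernel-verified Lean document; each statement's English description precedes it below -/
import Mathlib

section
/- Let d, k be natural numbers with k ≥ 3, and let t : ℕ → ℕ be a function (with t r = 0 for r < 2 and for r ≥ d + k). Set f₀ = ∑_{r≥2} t r and f₁ = ∑_{r≥2} r · t r. If 3 - 2d - 2k + f₁ - f₀ > 0 and 5k + t 2 + t 3 ≥ d + ∑_{r≥5} (r-4) · t r, then 3·(9 - 8k - 5d + 3f₁ - 4f₀) < 8·(3 - 2d - 2k + f₁ - f₀), i.e. the characteristic number (9 - 8k - 5d + 3f₁ - 4f₀)/(3 - 2d - 2k + f₁ - f₀) is strictly less than 8/3. -/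
/-!
Clearing denominators, `3 c̄₁² < 8 c̄₂` is `3 + d - 8k + (f₁ - 4f₀) < 0`. Now
`f₁ - 4f₀ = ∑ (r - 4) tᵣ ≤ S - 2t₂ - t₃`, since the terms with `r < 2` only lower it and
`r = 4` contributes nothing; the Hirzebruch-type inequality bounds `d + S` by `5k + t₂ + t₃`,
leaving `3 - 3k - t₂`, which is negative for `k ≥ 3`.
-/

open Finset

theorem Finset.sum_Ico_eq_sum_Ico_of_eq_zero {M : Type*} [AddCommMonoid M] {f : ℕ → M}
    {a n N : ℕ} (hf : ∀ r, n ≤ r → f r = 0) (hN : n ≤ N) :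
    ∑ r ∈ Ico a n, f r = ∑ r ∈ Ico a N, f r :=
  sum_subset (Ico_subset_Ico_right hN) fun r hrN hrn => by
    simp only [mem_Ico] at hrN hrn
    exact hf r (by omega)

theorem sum_mul_sub_four_mul_sum_eq {n : ℕ} (t : ℕ → ℕ) (htop : ∀ r, n ≤ r → t r = 0) :
    ∑ r ∈ range n, (r : ℤ) * t r - 4 * ∑ r ∈ range n, (t r : ℤ) =
      -4 * t 0 - 3 * t 1 - 2 * t 2 - t 3 + ∑ r ∈ Ico 5 n, ((r : ℤ) - 4) * t r := by
  have hvanish : ∀ r, n ≤ r → ((r : ℤ) - 4) * t r = 0 := fun r hr => by simp [htop r hr]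
  calc ∑ r ∈ range n, (r : ℤ) * t r - 4 * ∑ r ∈ range n, (t r : ℤ)
      = ∑ r ∈ range n, ((r : ℤ) - 4) * t r := by
        rw [mul_sum, ← sum_sub_distrib]
        exact sum_congr rfl fun r _ => by ring
    _ = ∑ r ∈ range (n + 5), ((r : ℤ) - 4) * t r := by
        simp only [range_eq_Ico]
        exact sum_Ico_eq_sum_Ico_of_eq_zero hvanish (by omega)
    _ = ∑ r ∈ range 5, ((r : ℤ) - 4) * t r + ∑ r ∈ Ico 5 (n + 5), ((r : ℤ) - 4) * t r :=
        (sum_range_add_sum_Ico _ (by omega)).symm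
    _ = -4 * t 0 - 3 * t 1 - 2 * t 2 - t 3 + ∑ r ∈ Ico 5 n, ((r : ℤ) - 4) * t r := by
        rw [sum_Ico_eq_sum_Ico_of_eq_zero hvanish (by omega : n ≤ n + 5)]
        simp only [sum_range_succ, sum_range_zero]
        push_cast
        ring

theorem charn_bound_general (d k : ℕ) (hk : 3 ≤ k) (t : ℕ → ℕ)
    (htop : ∀ r, d + k ≤ r → t r = 0)
    (f0 f1 S : ℤ)
    (hf0 : f0 = ∑ r ∈ Finset.range (d + k), (t r : ℤ))
    (hf1 : f1 = ∑ r ∈ Finset.range (d + k), (r : ℤ) * (t r : ℤ))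
    (hS : S = ∑ r ∈ Finset.Ico 5 (d + k), ((r : ℤ) - 4) * (t r : ℤ))
    (hHir : 5 * (k : ℤ) + (t 2 : ℤ) + (t 3 : ℤ) ≥ (d : ℤ) + S) :
    3 * (9 - 8 * (k : ℤ) - 5 * (d : ℤ) + 3 * f1 - 4 * f0) <
      8 * (3 - 2 * (d : ℤ) - 2 * (k : ℤ) + f1 - f0) := by
  have hmoment : f1 - 4 * f0 = -4 * t 0 - 3 * t 1 - 2 * t 2 - t 3 + S := by
    rw [hf0, hf1, hS]
    exact sum_mul_sub_four_mul_sum_eq t htop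
  have hk' : (3 : ℤ) ≤ k := by exact_mod_cast hk
  linarith [Int.natCast_nonneg (t 0), Int.natCast_nonneg (t 1), Int.natCast_nonneg (t 2)]

theorem charn_bound (d k : ℕ) (hk : 3 ≤ k) (t : ℕ → ℕ)
    (ht2 : ∀ r < 2, t r = 0) (htop : ∀ r, d + k ≤ r → t r = 0)
    (f0 f1 S : ℤ)
    (hf0 : f0 = ∑ r ∈ Finset.range (d + k), (t r : ℤ))
    (hf1 : f1 = ∑ r ∈ Finset.range (d + k), (r : ℤ) * (t r : ℤ))
    (hS : S = ∑ r ∈ Finset.Ico 5 (d + k), ((r : ℤ) - 4) * (t r : ℤ))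
    (hc2 : 0 < 3 - 2 * (d : ℤ) - 2 * (k : ℤ) + f1 - f0)
    (hHir : 5 * (k : ℤ) + (t 2 : ℤ) + (t 3 : ℤ) ≥ (d : ℤ) + S) :
    3 * (9 - 8 * (k : ℤ) - 5 * (d : ℤ) + 3 * f1 - 4 * f0) <
      8 * (3 - 2 * (d : ℤ) - 2 * (k : ℤ) + f1 - f0) :=
  charn_bound_general d k hk t htop f0 f1 S hf0 hf1 hS hHir
end

section
/- Let k ≥ 3 be a natural number and let t : ℕ → ℕ satisfy t r = 0 for r < 2 and for r ≥ k. Set f₀ = ∑_{r} t r, f₁ = ∑_{r} r · t r, f₂ = ∑_{r} r² · t r, and assume the combinatorial identity f₂ - f₁ = 4k² - 4k (every pair of the k conics meets in 4 points). Assume also that 3 - 2k + f₁ - f₀ > 0. Then (9 - 8k + 3f₁ - 4f₀) · (2k² - 4k + 3) ≥ (4k² - 12k + 9) · (3 - 2k + f₁ - f₀). -/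
/-! Once `f₂ - f₁` is fixed by the pair count, the target is linear in `f₀, f₁`:
`2k² f₁ - (4k² - 4k + 3) f₀ - 8k³ + 14k² - 6k ≥ 0`. It is `2k` times `Σ (r - 2)(k - 1 - r) t_r ≥ 0`
plus `3` times `f₀ ≤ 2k(k - 1)`, the pair count's form of `Σ (r - 2)(r + 1) t_r ≥ 0`; both weights
are nonnegative on the support `2 ≤ r ≤ k - 1` of `t`. -/

open Finset

theorem sum_mul_nonneg_of_nonneg_on_support {m k : ℕ} {t : ℕ → ℕ} (ht : ∀ r < m, t r = 0)
    {p : ℕ → ℤ} (hp : ∀ r, m ≤ r → r < k → 0 ≤ p r) :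
    0 ≤ ∑ r ∈ range k, p r * t r := by
  refine sum_nonneg fun r hr => ?_
  rcases lt_or_ge r m with hrm | hrm
  · simp [ht r hrm]
  · exact mul_nonneg (hp r hrm (mem_range.mp hr)) (Int.natCast_nonneg _)

theorem two_mul_sum_add_sum_mul_le_sum_sq_mul {k : ℕ} {t : ℕ → ℕ} (ht : ∀ r < 2, t r = 0) :
    2 * ∑ r ∈ range k, (t r : ℤ) + ∑ r ∈ range k, (r : ℤ) * t r ≤
      ∑ r ∈ range k, (r : ℤ) ^ 2 * t r := by
  have h := sum_mul_nonneg_of_nonneg_on_support (k := k) ht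
    (p := fun r => ((r : ℤ) - 2) * (r + 1)) fun r hr _ => by
      have : (2 : ℤ) ≤ r := by exact_mod_cast hr
      nlinarith
  have e : ∑ r ∈ range k, ((r : ℤ) - 2) * (r + 1) * t r =
      ∑ r ∈ range k, (r : ℤ) ^ 2 * t r - ∑ r ∈ range k, (r : ℤ) * t r -
        2 * ∑ r ∈ range k, (t r : ℤ) := by
    rw [mul_sum, ← sum_sub_distrib, ← sum_sub_distrib]
    exact sum_congr rfl fun r _ => by ring
  linarith

theorem sum_sq_mul_add_le_succ_mul_sum_mul {k : ℕ} {t : ℕ → ℕ} (ht : ∀ r < 2, t r = 0) :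
    ∑ r ∈ range k, (r : ℤ) ^ 2 * t r + 2 * ((k : ℤ) - 1) * ∑ r ∈ range k, (t r : ℤ) ≤
      ((k : ℤ) + 1) * ∑ r ∈ range k, (r : ℤ) * t r := by
  have h := sum_mul_nonneg_of_nonneg_on_support ht
    (p := fun r => ((r : ℤ) - 2) * ((k : ℤ) - 1 - r)) fun r hr hrk => by
      have : (2 : ℤ) ≤ r := by exact_mod_cast hr
      have : (r : ℤ) + 1 ≤ k := by exact_mod_cast hrk
      nlinarith
  have e : ∑ r ∈ range k, ((r : ℤ) - 2) * ((k : ℤ) - 1 - r) * t r =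
      ((k : ℤ) + 1) * ∑ r ∈ range k, (r : ℤ) * t r - ∑ r ∈ range k, (r : ℤ) ^ 2 * t r -
        2 * ((k : ℤ) - 1) * ∑ r ∈ range k, (t r : ℤ) := by
    rw [mul_sum, mul_sum, ← sum_sub_distrib, ← sum_sub_distrib]
    exact sum_congr rfl fun r _ => by ring
  linarith

theorem conic_lower_bound_general (k : ℕ) (t : ℕ → ℕ)
    (ht2 : ∀ r < 2, t r = 0)
    (f0 f1 f2 : ℤ)
    (hf0 : f0 = ∑ r ∈ Finset.range k, (t r : ℤ))
    (hf1 : f1 = ∑ r ∈ Finset.range k, (r : ℤ) * (t r : ℤ))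
    (hf2 : f2 = ∑ r ∈ Finset.range k, (r : ℤ) ^ 2 * (t r : ℤ))
    (hcomb : f2 - f1 = 4 * (k : ℤ) ^ 2 - 4 * (k : ℤ)) :
    (9 - 8 * (k : ℤ) + 3 * f1 - 4 * f0) * (2 * (k : ℤ) ^ 2 - 4 * (k : ℤ) + 3) ≥
      (4 * (k : ℤ) ^ 2 - 12 * (k : ℤ) + 9) * (3 - 2 * (k : ℤ) + f1 - f0) := by
  have hlow := two_mul_sum_add_sum_mul_le_sum_sq_mul (k := k) ht2
  have hhigh := sum_sq_mul_add_le_succ_mul_sum_mul (k := k) ht2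
  rw [← hf0, ← hf1, ← hf2] at hlow hhigh
  have hf0_le : f0 ≤ 2 * (k : ℤ) * (k - 1) := by linarith
  linear_combination 2 * (k : ℤ) * hhigh + 3 * hf0_le - 2 * (k : ℤ) * hcomb

theorem conic_lower_bound (k : ℕ) (hk : 3 ≤ k) (t : ℕ → ℕ)
    (ht2 : ∀ r < 2, t r = 0) (htop : ∀ r, k ≤ r → t r = 0)
    (f0 f1 f2 : ℤ)
    (hf0 : f0 = ∑ r ∈ Finset.range k, (t r : ℤ))
    (hf1 : f1 = ∑ r ∈ Finset.range k, (r : ℤ) * (t r : ℤ))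
    (hf2 : f2 = ∑ r ∈ Finset.range k, (r : ℤ) ^ 2 * (t r : ℤ))
    (hcomb : f2 - f1 = 4 * (k : ℤ) ^ 2 - 4 * (k : ℤ))
    (hc2 : 0 < 3 - 2 * (k : ℤ) + f1 - f0) :
    (9 - 8 * (k : ℤ) + 3 * f1 - 4 * f0) * (2 * (k : ℤ) ^ 2 - 4 * (k : ℤ) + 3) ≥
      (4 * (k : ℤ) ^ 2 - 12 * (k : ℤ) + 9) * (3 - 2 * (k : ℤ) + f1 - f0) :=
  conic_lower_bound_general k t ht2 f0 f1 f2 hf0 hf1 hf2 hcomb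
end

section
/- Let k ≥ 3 and let t : ℕ → ℕ be finitely supported with t r = 0 unless 2 ≤ r ≤ k - 1, satisfying ∑_r r(r-1) t r = 4k(k-1). Set f₀ = ∑ t r, f₁ = ∑ r t r, f₂ = ∑ r² t r. Then -8k³ + 14k² - 6k + 2k²f₁ + (-4k² + 4k - 3)f₀ ≥ 0 (inequality of rationals/integers scaled by 2: i.e. -16k³ + 28k² - 12k + 4k²f₁ + (-8k² + 8k - 6)f₀ ≥ 0). -/
/-!
Put `w(r) = (3 - 4k) r (r - 1) + 4k² r - 8k² + 8k - 6`. Since `∑ r (r - 1) t r = 4k(k - 1)`, the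
quantity to be bounded equals `∑ w(r) t r`, so it suffices that `w(r) ≥ 0` on the support
`2 ≤ r ≤ k - 1`. This follows from the factorization `w(r) = (r - 2) (4 (k - r)(k - 1) - r + 3)`,
whose second factor is at least `4 (k - 1) - r + 3 > 0` there.
-/

section CommRing

variable {R : Type*} [CommRing R]

def conicWeight (k r : R) : R :=
  (3 - 4 * k) * (r * (r - 1)) + 4 * k ^ 2 * r + (-8 * k ^ 2 + 8 * k - 6)

theorem conicWeight_eq_mul (k r : R) :
    conicWeight k r = (r - 2) * (4 * (k - r) * (k - 1) - r + 3) := by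
  unfold conicWeight
  ring

theorem sum_conicWeight_mul {ι : Type*} (s : Finset ι) (k : R) (r t : ι → R) :
    ∑ i ∈ s, conicWeight k (r i) * t i =
      (3 - 4 * k) * ∑ i ∈ s, r i * (r i - 1) * t i + 4 * k ^ 2 * ∑ i ∈ s, r i * t i +
        (-8 * k ^ 2 + 8 * k - 6) * ∑ i ∈ s, t i := by
  simp only [Finset.mul_sum, ← Finset.sum_add_distrib]
  exact Finset.sum_congr rfl fun i _ => by unfold conicWeight; ring

end CommRing

theorem conicWeight_nonneg {R : Type*} [CommRing R] [LinearOrder R] [IsStrictOrderedRing R]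
    {k r : R} (hr : 2 ≤ r) (hrk : r ≤ k - 1) : 0 ≤ conicWeight k r := by
  rw [conicWeight_eq_mul]
  have hprod : k - 1 ≤ (k - r) * (k - 1) :=
    le_mul_of_one_le_left (by linarith) (by linarith)
  exact mul_nonneg (by linarith) (by linarith)

theorem main_combinatorial_inequality_general (k : ℕ) (t : ℕ → ℕ)
    (hsupp : ∀ r, ¬ (2 ≤ r ∧ r ≤ k - 1) → t r = 0)
    (hcomb : ∑ r ∈ Finset.range k, (r : ℤ) * ((r : ℤ) - 1) * (t r : ℤ) =
      4 * (k : ℤ) * ((k : ℤ) - 1))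
    (f0 f1 : ℤ)
    (hf0 : f0 = ∑ r ∈ Finset.range k, (t r : ℤ))
    (hf1 : f1 = ∑ r ∈ Finset.range k, (r : ℤ) * (t r : ℤ)) :
    0 ≤ -16 * (k : ℤ) ^ 3 + 28 * (k : ℤ) ^ 2 - 12 * (k : ℤ) + 4 * (k : ℤ) ^ 2 * f1 +
        (-8 * (k : ℤ) ^ 2 + 8 * (k : ℤ) - 6) * f0 := by
  have hweighted : 0 ≤ ∑ r ∈ Finset.range k, conicWeight (k : ℤ) r * t r := by
    refine Finset.sum_nonneg fun r _ => ?_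
    by_cases hr : 2 ≤ r ∧ r ≤ k - 1
    · exact mul_nonneg (conicWeight_nonneg (by exact_mod_cast hr.1) (by omega))
        (Int.natCast_nonneg _)
    · simp [hsupp r hr]
  rw [sum_conicWeight_mul, hcomb, ← hf0, ← hf1] at hweighted
  linear_combination hweighted

theorem main_combinatorial_inequality (k : ℕ) (hk : 3 ≤ k) (t : ℕ → ℕ)
    (hsupp : ∀ r, ¬ (2 ≤ r ∧ r ≤ k - 1) → t r = 0)
    (hcomb : ∑ r ∈ Finset.range k, (r : ℤ) * ((r : ℤ) - 1) * (t r : ℤ) =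
      4 * (k : ℤ) * ((k : ℤ) - 1))
    (f0 f1 : ℤ)
    (hf0 : f0 = ∑ r ∈ Finset.range k, (t r : ℤ))
    (hf1 : f1 = ∑ r ∈ Finset.range k, (r : ℤ) * (t r : ℤ)) :
    0 ≤ -16 * (k : ℤ) ^ 3 + 28 * (k : ℤ) ^ 2 - 12 * (k : ℤ) + 4 * (k : ℤ) ^ 2 * f1 +
        (-8 * (k : ℤ) ^ 2 + 8 * (k : ℤ) - 6) * f0 :=
  main_combinatorial_inequality_general k t hsupp hcomb f0 f1 hf0 hf1
end
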